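/- (No memoryless strategy is safe.) For every constant p ∈ [0,1], the stream defined by μ_0 = (3/4, 1/4, 0) and μ_{i+1} = G_p(μ_i) violates the safety constraint at some step: there exists i ≤ 2 with μ_i(B) ≠ 1/4. Hence no memoryless strategy keeps the probability of state B equal to 1/4 at all times from the initial distribution (3/4, 1/4, 0). -/
import Mathlib

/-- `G p (a,b,c) = (p·a + c/2, (1−p)·a, b + c/2)`: one step of the running-example MDP
when action `a` is chosen in state `A` with probability `p` (and `b` with probability `1−p`). -/
noncomputable def G (p : ℝ) : ℝ × ℝ × ℝ → ℝ × ℝ × ℝ :=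
  fun q => (p * q.1 + q.2.2 / 2, (1 - p) * q.1, q.2.1 + q.2.2 / 2)

/-- The stream induced by the memoryless strategy with constant probability `p` of action `a`
in state `A`, from `μ_0 = (3/4, 1/4, 0)`. -/
noncomputable def muConst (p : ℝ) : ℕ → ℝ × ℝ × ℝ
  | 0 => (3 / 4, 1 / 4, 0)
  | i + 1 => G p (muConst p i)

/-- **no memoryless strategy is safe.** For every constant `p ∈ [0,1]`, the
induced stream violates `μ(B) = 1/4` at some step `i ≤ 2`. -/
theorem no_memoryless_safe (p : ℝ) (h0 : 0 ≤ p) (h1 : p ≤ 1) :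
    ∃ i : ℕ, i ≤ 2 ∧ (muConst p i).2.1 ≠ 1 / 4 := by
  by_cases hp : p = 2 / 3
  · refine ⟨2, by norm_num, ?_⟩
    simp [muConst, G, hp]
    norm_num
  · refine ⟨1, by norm_num, ?_⟩
    simp only [muConst, G]
    intro h
    apply hp
    nlinarith
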